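/- arXiv:2601.10697 — 4 statements merged into one kernel-verified Lean document; each statement's English description precedes it below -/
import Mathlib

section
/- Let 2 ≤ t ≤ m, fix i ∈ {1,...,m}, and let E_i be the set of t-subsets of {1,...,m} containing i. Assign an independent uniform F_2-valued random variable ξ_e to each e ∈ E_i. Fix j ≠ i and for each e ∈ E_i with j ∉ e define the message F_e = ξ_e + Σ_{k ∈ e \ {i}} ξ_{(e ∪ {j}) \ {k}} (sum over F_2). Then from the collection (F_e : e ∈ E_i, j ∉ e) together with (ξ_e : e ∈ E_i, j ∈ e), one can determine all of (ξ_e : e ∈ E_i); i.e., the map from (ξ_e)_{e ∈ E_i} to ((F_e)_{e: j∉e}, (ξ_e)_{e: j∈e}) is injective (in fact an F_2-linear bijection). -/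
/-!
Each message `F_e` (for `j ∉ e`) is `ξ e` plus correction terms `ξ ((e ∪ {j}) \ {k})` with
`k ∈ e \ {i}`; these edges all contain both `i` and `j`, so their values are already known.
Hence `ξ e` is recovered from `F_e` by cancelling the known corrections.
-/

namespace Finset

variable {α : Type*} [DecidableEq α] {s : Finset α} {a b : α}

theorem card_erase_insert_of_notMem_of_mem (ha : a ∉ s) (hb : b ∈ s) :
    ((insert a s).erase b).card = s.card := by
  rw [card_erase_of_mem (mem_insert_of_mem hb), card_insert_of_notMem ha, Nat.add_sub_cancel]

theorem mem_erase_insert_of_notMem_of_mem (ha : a ∉ s) (hb : b ∈ s) :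
    a ∈ (insert a s).erase b :=
  mem_erase.2 ⟨fun hab => ha (hab ▸ hb), mem_insert_self a s⟩

end Finset

open Finset

theorem stmt7_general (m t : ℕ) (i j : Fin m)
    (ξ ξ' : Finset (Fin m) → ZMod 2)
    (hknown : ∀ e : Finset (Fin m), e.card = t → i ∈ e → j ∈ e → ξ e = ξ' e)
    (hmsg : ∀ e : Finset (Fin m), e.card = t → i ∈ e → j ∉ e →
      ξ e + ∑ k ∈ e.erase i, ξ ((insert j e).erase k)
        = ξ' e + ∑ k ∈ e.erase i, ξ' ((insert j e).erase k)) :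
    ∀ e : Finset (Fin m), e.card = t → i ∈ e → ξ e = ξ' e := by
  intro e hcard hie
  by_cases hje : j ∈ e
  · exact hknown e hcard hie hje
  have hcorrections : ∀ k ∈ e.erase i,
      ξ ((insert j e).erase k) = ξ' ((insert j e).erase k) := fun k hk =>
    hknown _ (by rw [card_erase_insert_of_notMem_of_mem hje (mem_of_mem_erase hk), hcard])
      (mem_erase.2 ⟨(ne_of_mem_erase hk).symm, mem_insert_of_mem hie⟩)
      (mem_erase_insert_of_notMem_of_mem hje (mem_of_mem_erase hk))
  have hmsg_e := hmsg e hcard hie hje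
  rw [sum_congr rfl hcorrections] at hmsg_e
  exact add_right_cancel hmsg_e

/-- Party `j` achieves omniscience in the star-hypergraph scheme anchored at `i`:
the values `ξ e` for hyperedges `e` of the star containing `j`, together with the
messages `ξ e + ∑_{k ∈ e \ {i}} ξ ((e ∪ {j}) \ {k})` for hyperedges not containing `j`,
determine all the values `ξ e`, `e ∈ E_i`. -/
theorem stmt7 (m t : ℕ) (h2 : 2 ≤ t) (htm : t ≤ m) (i j : Fin m) (hij : j ≠ i)
    (ξ ξ' : Finset (Fin m) → ZMod 2)
    (hknown : ∀ e : Finset (Fin m), e.card = t → i ∈ e → j ∈ e → ξ e = ξ' e)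
    (hmsg : ∀ e : Finset (Fin m), e.card = t → i ∈ e → j ∉ e →
      ξ e + ∑ k ∈ e.erase i, ξ ((insert j e).erase k)
        = ξ' e + ∑ k ∈ e.erase i, ξ' ((insert j e).erase k)) :
    ∀ e : Finset (Fin m), e.card = t → i ∈ e → ξ e = ξ' e :=
  stmt7_general m t i j ξ ξ' hknown hmsg
end

section
/- Let m = k+1 with k ≥ 4, and let H be the 3-uniform cycle-inducing hypergraph with anchor k+1 and hyperedges e_j = {k+1, j, j+1} for 1 ≤ j ≤ k−1 and e_k = {k+1, k, 1}. Suppose k ≡ 0 or 2 (mod 3). Consider the F_2-linear messages F_j = ξ_{e_j} + ξ_{e_{j+1}} + ξ_{e_{j+2}} for 1 ≤ j ≤ k−2. Then for every party p ∈ {1,...,k}, the values (ξ_{e_j})_{j=1}^k are uniquely determined by the messages (F_1,...,F_{k-2}) together with the bits of the hyperedges containing p; equivalently, the F_2-span of the message vectors together with the standard basis vectors indexed by hyperedges containing p is all of F_2^k. -/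
/-- Cycle-inducing 3-uniform hypergraph on `k+1` vertices (`k ≡ 0, 2 (mod 3)`):
the `k-2` messages `ξ_j + ξ_{j+1} + ξ_{j+2}` together with the two bits known to any
party `p` (namely `ξ_{p-1}` and `ξ_p`, cyclically) determine all `k` hyperedge bits.
Hyperedges are indexed by `Fin k` (the hyperedge `e_j = {anchor, j, j+1}` cyclically). -/
theorem stmt10 (k : ℕ) [NeZero k] (hk : 4 ≤ k) (hmod : k % 3 = 0 ∨ k % 3 = 2)
    (ξ ξ' : Fin k → ZMod 2) (p : Fin k)
    (hp1 : ξ p = ξ' p) (hp2 : ξ (p - 1) = ξ' (p - 1))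
    (hmsg : ∀ j : Fin k, (j : ℕ) + 2 < k →
      ξ j + ξ (j + 1) + ξ (j + 2) = ξ' j + ξ' (j + 1) + ξ' (j + 2)) :
    ξ = ξ' := by
  have hone : ((1 : Fin k) : ℕ) = 1 := by
    rw [Fin.val_one']
    exact Nat.mod_eq_of_lt (by omega)
  have htwo : ((2 : Fin k) : ℕ) = 2 := by
    have h : (2 : Fin k) = (1 : Fin k) + 1 := Fin.ext (by rw [Fin.val_add, hone]; rfl)
    rw [h, Fin.val_add, hone]
    exact Nat.mod_eq_of_lt (by omega)
  set δ : ℕ → ZMod 2 := fun i => if h : i < k then ξ ⟨i, h⟩ - ξ' ⟨i, h⟩ else 0 with hδ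
  have hrel : ∀ j : ℕ, j + 2 < k → δ j + δ (j+1) + δ (j+2) = 0 := by
    intro j hj
    have h0 : j < k := by omega
    have h1 : j + 1 < k := by omega
    have hm := hmsg ⟨j, h0⟩ (by simpa using hj)
    have e1 : (⟨j, h0⟩ + 1 : Fin k) = ⟨j+1, h1⟩ := by
      apply Fin.ext
      rw [Fin.val_add, hone]
      exact Nat.mod_eq_of_lt h1
    have e2 : (⟨j, h0⟩ + 2 : Fin k) = ⟨j+2, hj⟩ := by
      apply Fin.ext
      rw [Fin.val_add, htwo]
      exact Nat.mod_eq_of_lt hj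
    rw [e1, e2] at hm
    simp only [hδ, dif_pos h0, dif_pos h1, dif_pos hj]
    linear_combination hm
  have hstep : ∀ j : ℕ, j + 3 < k → δ (j+3) = δ j := by
    intro j hj
    have h1 := hrel j (by omega)
    have h2 := hrel (j+1) (by omega)
    have e : j + 1 + 1 = j + 2 := by ring
    have e' : j + 1 + 2 = j + 3 := by ring
    rw [e, e'] at h2
    have hsub : δ (j+3) - δ j = 0 := by linear_combination h2 - h1
    exact sub_eq_zero.mp hsub
  have hper : ∀ i, i < k → δ i = δ (i % 3) := by
    intro i
    induction i using Nat.strong_induction_on with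
    | _ i ih =>
      intro hi
      rcases Nat.lt_or_ge i 3 with h3 | h3
      · rw [Nat.mod_eq_of_lt h3]
      · have hs := hstep (i - 3) (by omega)
        have e : i - 3 + 3 = i := by omega
        rw [e] at hs
        rw [hs, ih (i-3) (by omega) (by omega)]
        congr 1
        omega
  have hp : δ p.val = 0 := by
    simp only [hδ, dif_pos p.isLt, Fin.eta]
    exact sub_eq_zero.mpr hp1
  have hq : δ (p-1).val = 0 := by
    simp only [hδ, dif_pos (p-1).isLt, Fin.eta]
    exact sub_eq_zero.mpr hp2
  have hqval : (p - 1).val = if p.val = 0 then k - 1 else p.val - 1 := by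
    have hv : (p - 1).val = (k - 1 + p.val) % k := by
      rw [Fin.sub_def]
      simp only [hone]
    rw [hv]
    by_cases h0 : p.val = 0
    · rw [if_pos h0, h0, Nat.add_zero]
      exact Nat.mod_eq_of_lt (by omega)
    · rw [if_neg h0]
      have hlt := p.isLt
      have e : k - 1 + p.val = (p.val - 1) + k := by omega
      rw [e, Nat.add_mod_right]
      exact Nat.mod_eq_of_lt (by omega)
  have hne : p.val % 3 ≠ (p-1).val % 3 := by
    rw [hqval]
    by_cases h0 : p.val = 0
    · rw [if_pos h0, h0]
      omega
    · rw [if_neg h0]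
      have := p.isLt
      omega
  have hpa : δ (p.val % 3) = 0 := by rw [← hper p.val p.isLt]; exact hp
  have hqa : δ ((p-1).val % 3) = 0 := by rw [← hper (p-1).val (p-1).isLt]; exact hq
  have h012 : δ 0 + δ 1 + δ 2 = 0 := hrel 0 (by omega)
  have hz : δ 0 = 0 ∧ δ 1 = 0 ∧ δ 2 = 0 := by
    rcases (show p.val % 3 = 0 ∨ p.val % 3 = 1 ∨ p.val % 3 = 2 by omega) with h|h|h <;>
      rcases (show (p-1).val % 3 = 0 ∨ (p-1).val % 3 = 1 ∨ (p-1).val % 3 = 2 by omega) with h'|h'|h' <;>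
      rw [h] at hpa hne <;> rw [h'] at hqa hne <;>
      first
        | exact absurd rfl hne
        | (refine ⟨?_, ?_, ?_⟩ <;> first | exact hpa | exact hqa | linear_combination h012 - hpa - hqa)
  have hall : ∀ r, r < k → δ r = 0 := by
    intro r hr
    rw [hper r hr]
    rcases (show r % 3 = 0 ∨ r % 3 = 1 ∨ r % 3 = 2 by omega) with h|h|h <;> rw [h] <;>
      simp [hz.1, hz.2.1, hz.2.2]
  funext i
  have hi := hall i.val i.isLt
  simp only [hδ, dif_pos i.isLt, Fin.eta] at hi
  exact sub_eq_zero.mp hi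
end

section
/- Let m = k+1 with k ≥ 4 and k ≡ 1 (mod 3). With hyperedges e_j as in the cycle-inducing 3-uniform hypergraph on {1,...,k+1} anchored at k+1, consider the k−2 messages F_j = ξ_{e_j} + ξ_{e_{j+1}} + ξ_{e_{j+2}} for 1 ≤ j ≤ k−3, together with F_{k-2} = ξ_{e_{k-1}} + ξ_{e_k} + ξ_{e_1}. Then for every party p ∈ {1,...,k}, the full vector (ξ_{e_1},...,ξ_{e_k}) ∈ F_2^k is determined by these k−2 messages together with the two bits known to party p. -/
private lemma z2_step (a b c e : ZMod 2) (h1 : a + b + c = 0) (h2 : b + c + e = 0) : e = a := by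
  revert a b c e; decide

private lemma z2_msg (a b c a' b' c' : ZMod 2) (h : a + b + c = a' + b' + c') :
    (a + a') + (b + b') + (c + c') = 0 := by revert a b c a' b' c'; decide

private lemma z2_solve (a b c : ZMod 2) (h : a + b + c = 0) :
    (a = 0 → b = 0 → c = 0) ∧ (a = 0 → c = 0 → b = 0) ∧ (b = 0 → c = 0 → a = 0) := by
  revert a b c; decide

private lemma z2_self (a b : ZMod 2) (h : a = b) : a + b = 0 := by revert a b; decide

set_option maxHeartbeats 1000000

private lemma z2_eq (a b : ZMod 2) (h : a + b = 0) : a = b := by revert a b; decide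

open Fin.NatCast in
/-- Cycle-inducing 3-uniform hypergraph on `k+1` vertices with `k ≡ 1 (mod 3)`:
the `k-3` messages `ξ_j + ξ_{j+1} + ξ_{j+2}` (for the first `k-3` indices), together
with the extra message `ξ_{k-2} + ξ_{k-1} + ξ_0` and the two bits known to any party
`p` (namely `ξ_{p-1}` and `ξ_p`, cyclically), determine all `k` hyperedge bits. -/
theorem stmt11 (k : ℕ) [NeZero k] (hk : 4 ≤ k) (hmod : k % 3 = 1)
    (ξ ξ' : Fin k → ZMod 2) (p : Fin k)
    (hp1 : ξ p = ξ' p) (hp2 : ξ (p - 1) = ξ' (p - 1))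
    (hmsg : ∀ j : Fin k, (j : ℕ) + 3 < k →
      ξ j + ξ (j + 1) + ξ (j + 2) = ξ' j + ξ' (j + 1) + ξ' (j + 2))
    (hlast : ξ ⟨k - 2, by omega⟩ + ξ ⟨k - 1, by omega⟩ + ξ ⟨0, by omega⟩
      = ξ' ⟨k - 2, by omega⟩ + ξ' ⟨k - 1, by omega⟩ + ξ' ⟨0, by omega⟩) :
    ξ = ξ' := by
  set d : ℕ → ZMod 2 := fun n => ξ (n : Fin k) + ξ' (n : Fin k) with hd
  have hcast : ∀ m : ℕ, m < k → ((m : Fin k) : ℕ) = m := fun m hm => Fin.val_cast_of_lt hm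
  have hA : ∀ n, n + 3 < k → d n + d (n + 1) + d (n + 2) = 0 := by
    intro n hn
    have h := hmsg (n : Fin k) (by rw [hcast n (by omega)]; omega)
    have e1 : ((n : Fin k) + 1) = ((n + 1 : ℕ) : Fin k) := by push_cast; ring
    have e2 : ((n : Fin k) + 2) = ((n + 2 : ℕ) : Fin k) := by push_cast; ring
    rw [e1, e2] at h
    exact z2_msg _ _ _ _ _ _ h
  have hper : ∀ n, n + 4 < k → d (n + 3) = d n := by
    intro n hn
    have h1 := hA n (by omega)
    have h2 : d (n + 1) + d (n + 2) + d (n + 3) = 0 := hA (n + 1) (by omega)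
    exact z2_step _ _ _ _ h1 h2
  have hper3 : ∀ m, m ≤ k - 2 → d m = d (m % 3) := by
    intro m
    induction m using Nat.strong_induction_on with
    | _ m ih =>
      intro hm
      rcases lt_or_ge m 3 with h | h
      · rw [Nat.mod_eq_of_lt h]
      · obtain ⟨n, rfl⟩ : ∃ n, m = n + 3 := ⟨m - 3, by omega⟩
        rw [hper n (by omega), ih n (by omega) (by omega)]
        congr 1
        omega
  have hsum : d 0 + d 1 + d 2 = 0 := hA 0 (by omega)
  have hlast' : d (k - 2) + d (k - 1) + d 0 = 0 := by
    have e1 : ((k - 2 : ℕ) : Fin k) = ⟨k - 2, by omega⟩ := Fin.ext (hcast _ (by omega))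
    have e2 : ((k - 1 : ℕ) : Fin k) = ⟨k - 1, by omega⟩ := Fin.ext (hcast _ (by omega))
    have e0 : ((0 : ℕ) : Fin k) = ⟨0, by omega⟩ := Fin.ext (hcast _ (by omega))
    simp only [hd]
    rw [e1, e2, e0]
    exact z2_msg _ _ _ _ _ _ hlast
  have hk2 : d (k - 2) = d 2 := by
    rw [hper3 (k - 2) (by omega)]
    congr 1
    omega
  have hlast2 : d 2 + d 0 + d (k - 1) = 0 := by
    rw [hk2] at hlast'; linear_combination hlast'
  have hsum' : d 1 + d 2 + d 0 = 0 := by linear_combination hsum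
  have hkm1 : d (k - 1) = d 1 := z2_step _ _ _ _ hsum' hlast2
  have hdp : d p.val = 0 := by
    simp only [hd]
    rw [Fin.cast_val_eq_self]
    exact z2_self _ _ hp1
  have hdq : d (p - 1).val = 0 := by
    simp only [hd]
    rw [Fin.cast_val_eq_self]
    exact z2_self _ _ hp2
  have hqval : (p - 1).val = if p.val = 0 then k - 1 else p.val - 1 := by
    have hpk := p.isLt
    have h1 : ((1 : Fin k) : ℕ) = 1 := by
      rw [Fin.val_one']; exact Nat.mod_eq_of_lt (by omega)
    rw [Fin.sub_def]
    simp only [h1]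
    split <;> rename_i h
    · have e : k - 1 + p.val = k - 1 := by omega
      simp only [e]
      exact Nat.mod_eq_of_lt (by omega)
    · have e : k - 1 + p.val = k + (p.val - 1) := by omega
      rw [e, Nat.add_mod_left, Nat.mod_eq_of_lt (by omega)]
  have h012 : d 0 = 0 ∧ d 1 = 0 ∧ d 2 = 0 := by
    by_cases hp0 : p.val = 0
    · have hd0 : d 0 = 0 := by rw [← hp0]; exact hdp
      have hdk : d (k - 1) = 0 := by
        rw [hqval] at hdq; rw [if_pos hp0] at hdq; exact hdq
      have hd1 : d 1 = 0 := by rw [← hkm1]; exact hdk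
      exact ⟨hd0, hd1, (z2_solve _ _ _ hsum).1 hd0 hd1⟩
    · have hq' : (p - 1).val = p.val - 1 := by rw [hqval, if_neg hp0]
      rw [hq'] at hdq
      by_cases hpk : p.val = k - 1
      · have hd1 : d 1 = 0 := by rw [← hkm1, ← hpk]; exact hdp
        have hd2 : d 2 = 0 := by
          rw [← hk2]; have : p.val - 1 = k - 2 := by omega
          rw [this] at hdq; exact hdq
        exact ⟨(z2_solve _ _ _ hsum).2.2 hd1 hd2, hd1, hd2⟩
      · have hplt := p.isLt
        have h1 : d (p.val % 3) = 0 := by rw [← hper3 p.val (by omega)]; exact hdp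
        have h2 : d ((p.val - 1) % 3) = 0 := by
          rw [← hper3 (p.val - 1) (by omega)]; exact hdq
        have hc : p.val % 3 = 0 ∧ (p.val - 1) % 3 = 2 ∨
            p.val % 3 = 1 ∧ (p.val - 1) % 3 = 0 ∨
            p.val % 3 = 2 ∧ (p.val - 1) % 3 = 1 := by omega
        rcases hc with ⟨e1, e2⟩ | ⟨e1, e2⟩ | ⟨e1, e2⟩ <;> rw [e1] at h1 <;> rw [e2] at h2
        · exact ⟨h1, (z2_solve _ _ _ hsum).2.1 h1 h2, h2⟩
        · exact ⟨h2, h1, (z2_solve _ _ _ hsum).1 h2 h1⟩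
        · exact ⟨(z2_solve _ _ _ hsum).2.2 h2 h1, h2, h1⟩
  obtain ⟨hd0, hd1, hd2⟩ := h012
  funext i
  have hdi : d i.val = 0 := by
    rcases Nat.lt_or_ge i.val (k - 1) with h | h
    · rw [hper3 i.val (by omega)]
      have : i.val % 3 = 0 ∨ i.val % 3 = 1 ∨ i.val % 3 = 2 := by omega
      rcases this with e | e | e <;> rw [e] <;> assumption
    · have hik : i.val = k - 1 := by have := i.isLt; omega
      rw [hik, hkm1]; exact hd1
  simp only [hd] at hdi
  rw [Fin.cast_val_eq_self] at hdi
  exact z2_eq _ _ hdi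
end

section
/- Let k ≥ 4 and consider the (k−2) × k matrix over F_2 whose j-th row is the indicator vector of {j, j+1, j+2} ⊆ {1,...,k} (for k ≢ 1 mod 3), or whose rows are indicators of {j, j+1, j+2} for 1 ≤ j ≤ k−3 together with the indicator of {k−1, k, 1} (for k ≡ 1 mod 3). This matrix has full row rank k−2 over F_2; hence its kernel has dimension 2. -/
/-- The `(k-2) × k` message matrix of the cycle-inducing scheme (rows are indicators of
`{j, j+1, j+2}`, except that for `k ≡ 1 (mod 3)` the last row is the indicator of
`{k-2, k-1, 0}`, i.e. `{k-1, k, 1}` in 1-indexed notation) has full row rank `k-2`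
over `F_2`; hence its kernel has dimension `2`. -/
theorem stmt12 (k : ℕ) (hk : 4 ≤ k)
    (M : Matrix (Fin (k - 2)) (Fin k) (ZMod 2))
    (hM : ∀ (j : Fin (k - 2)) (c : Fin k), M j c =
      if (if k % 3 = 1 ∧ (j : ℕ) = k - 3
            then ((c : ℕ) = k - 2 ∨ (c : ℕ) = k - 1 ∨ (c : ℕ) = 0)
            else ((c : ℕ) = (j : ℕ) ∨ (c : ℕ) = (j : ℕ) + 1 ∨ (c : ℕ) = (j : ℕ) + 2))
        then 1 else 0) :
    M.rank = k - 2 ∧ Module.finrank (ZMod 2) (LinearMap.ker M.mulVecLin) = 2 := by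
  have hg : ∀ i : Fin (k - 2), (i : ℕ) + 2 < k := by
    intro i; have := i.isLt; omega
  set g : Fin (k - 2) → Fin k := fun i => ⟨(i : ℕ) + 2, hg i⟩ with hgdef
  set N : Matrix (Fin (k - 2)) (Fin (k - 2)) (ZMod 2) := M.submatrix id g with hN
  -- N is lower triangular
  have htri : N.BlockTriangular OrderDual.toDual := by
    intro i j hij
    have hij' : (i : ℕ) < (j : ℕ) := hij
    have hjlt := j.isLt
    simp only [hN, Matrix.submatrix_apply, id_eq, hM]
    rw [if_neg]
    by_cases hw : k % 3 = 1 ∧ (i : ℕ) = k - 3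
    · rw [if_pos hw]
      push_neg
      refine ⟨by omega, by omega, by omega⟩
    · rw [if_neg hw]
      push_neg
      have hgj : ((g j : Fin k) : ℕ) = (j : ℕ) + 2 := rfl
      refine ⟨by omega, by omega, by omega⟩
  have hdiag : ∀ i, N i i = 1 := by
    intro i
    have hilt := i.isLt
    simp only [hN, Matrix.submatrix_apply, id_eq]
    rw [hM, if_pos]
    by_cases hw : k % 3 = 1 ∧ (i : ℕ) = k - 3
    · rw [if_pos hw]
      right; left
      show (i : ℕ) + 2 = k - 1
      omega
    · rw [if_neg hw]
      right; right
      trivial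
  have hdet : N.det = 1 := by
    rw [Matrix.det_of_lowerTriangular N htri]
    simp [hdiag]
  have hunit : IsUnit N := by
    rw [Matrix.isUnit_iff_isUnit_det, hdet]; exact isUnit_one
  have hrankN : N.rank = k - 2 := by
    rw [Matrix.rank_of_isUnit N hunit, Fintype.card_fin]
  -- N = M * P for a column-selection matrix P
  set P : Matrix (Fin k) (Fin (k - 2)) (ZMod 2) := fun c i => if c = g i then 1 else 0 with hP
  have hMP : M * P = N := by
    ext j i
    rw [Matrix.mul_apply]
    simp [hN, hP, Matrix.mul_apply, mul_ite, mul_one, mul_zero]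
  have h1 : k - 2 ≤ M.rank := by
    have h := Matrix.rank_mul_le_left M P
    rw [hMP, hrankN] at h
    exact h
  have h2 : M.rank ≤ k - 2 := by
    have := M.rank_le_card_height
    simpa using this
  have hrank : M.rank = k - 2 := le_antisymm h2 h1
  refine ⟨hrank, ?_⟩
  have hrn := LinearMap.finrank_range_add_finrank_ker M.mulVecLin
  rw [Module.finrank_fintype_fun_eq_card, Fintype.card_fin] at hrn
  have : M.rank = Module.finrank (ZMod 2) (LinearMap.range M.mulVecLin) := rfl
  omega
end
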